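/- arXiv:1812.04838 — 2 statements merged into one kernel-verified Lean document; each statement's English description precedes it below -/
import Mathlib

section
/- Let G be a topological group, N a closed normal subgroup such that every open subgroup of N has finite index in N. Let N* = closure(G₀N) where G₀ is the identity component. Then every open subgroup of N* has finite index in N*. -/
open scoped Pointwise

/-- If every open subgroup of the closed normal subgroup `N` has finite index
in `N`, then every open subgroup of `N* = closure(G₀N)` has finite index in `N*`. -/
theorem stmt8 (G : Type*) [Group G] [TopologicalSpace G] [IsTopologicalGroup G]
    (N : Subgroup G) [N.Normal] (hN : IsClosed (N : Set G))
    (hNprop : ∀ M : Subgroup N, IsOpen (M : Set N) → M.FiniteIndex)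
    (Nstar : Subgroup G)
    (hNstar : Nstar = (Subgroup.connectedComponentOfOne G ⊔ N).topologicalClosure) :
    ∀ M : Subgroup Nstar, IsOpen (M : Set Nstar) → M.FiniteIndex := by
  intro M hM
  set G₀ := Subgroup.connectedComponentOfOne G with hG₀def
  haveI hG₀normal : G₀.Normal := by
    constructor
    intro n hn g
    have := Continuous.image_connectedComponent_subset
      (by continuity : Continuous fun x : G => g * x * g⁻¹) (1 : G)
    simp only [mul_one, mul_inv_cancel] at this
    exact this ⟨n, hn, rfl⟩
  have hG₀le : G₀ ≤ Nstar := hNstar ▸ le_trans le_sup_left (Subgroup.le_topologicalClosure _)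
  have hNle : N ≤ Nstar := hNstar ▸ le_trans le_sup_right (Subgroup.le_topologicalClosure _)
  -- M is closed in Nstar
  have hMclosed : IsClosed (M : Set Nstar) := Subgroup.isClosed_of_isOpen M hM
  have hMclopen : IsClopen (M : Set Nstar) := ⟨hMclosed, hM⟩
  -- Every element of Nstar lying in G₀ belongs to M.
  have hG₀subM : ∀ x : Nstar, (x : G) ∈ G₀ → x ∈ M := by
    intro x hx
    have hC : IsPreconnected ((Subtype.val : Nstar → G) ⁻¹' (G₀ : Set G)) := by
      have himg : (Subtype.val : Nstar → G) '' ((Subtype.val : Nstar → G) ⁻¹' (G₀ : Set G))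
          = (G₀ : Set G) := by
        apply Set.image_preimage_eq_of_subset
        intro g hg
        exact ⟨⟨g, hG₀le hg⟩, rfl⟩
      have h2 : IsPreconnected ((Subtype.val : Nstar → G) ''
          ((Subtype.val : Nstar → G) ⁻¹' (G₀ : Set G))) := by
        rw [himg]; exact isPreconnected_connectedComponent
      exact Topology.IsInducing.subtypeVal.isPreconnected_image.mp h2
    have := hC.subset_isClopen hMclopen ⟨1, Subgroup.one_mem G₀, Subgroup.one_mem M⟩
    exact this hx
  -- The preimage of M in N is open, hence of finite index in N.
  let ι : N →* Nstar := Subgroup.inclusion hNle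
  have hιcont : Continuous ι := Continuous.subtype_mk (continuous_subtype_val) _
  let K : Subgroup N := M.comap ι
  have hKopen : IsOpen (K : Set N) := hM.preimage hιcont
  have hKfi : K.FiniteIndex := hNprop K hKopen
  have hKfin : Finite (N ⧸ K) := by
    have := hKfi.index_ne_zero
    rw [Subgroup.index] at this
    exact Nat.finite_of_card_ne_zero this
  -- surjection N ⧸ K → Nstar ⧸ M
  let f : N ⧸ K → Nstar ⧸ M :=
    Quotient.map' ι (by
      intro a b hab
      rw [QuotientGroup.leftRel_apply] at hab ⊢
      exact hab)
  have hfsurj : Function.Surjective f := by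
    intro q
    induction q using QuotientGroup.induction_on with
    | H x =>
      -- x ∈ Nstar = closure (G₀ ⊔ N); the open coset x • M meets G₀ ⊔ N
      have hxcl : (x : G) ∈ closure ((G₀ ⊔ N : Subgroup G) : Set G) := by
        have h2 : (x : G) ∈ (G₀ ⊔ N).topologicalClosure := hNstar ▸ x.2
        exact h2
      have hxcl' : x ∈ closure ((Subtype.val : Nstar → G) ⁻¹' ((G₀ ⊔ N : Subgroup G) : Set G)) := by
        rw [Topology.IsInducing.subtypeVal.closure_eq_preimage_closure_image]
        refine Set.mem_preimage.mpr (closure_mono ?_ hxcl)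
        intro g hg
        exact ⟨⟨g, hNstar ▸ subset_closure hg⟩, hg, rfl⟩
      -- the open set x • M
      have hU : IsOpen {y : Nstar | x⁻¹ * y ∈ M} := by
        have : {y : Nstar | x⁻¹ * y ∈ M} = (fun y => x⁻¹ * y) ⁻¹' (M : Set Nstar) := rfl
        rw [this]
        exact hM.preimage (by continuity)
      have hxU : x ∈ {y : Nstar | x⁻¹ * y ∈ M} := by simp [Subgroup.one_mem]
      obtain ⟨y, hyU, hyS⟩ := (mem_closure_iff.mp hxcl') _ hU hxU
      -- y = n * g with n ∈ N, g ∈ G₀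
      have hy : (y : G) ∈ ((N : Set G) * (G₀ : Set G)) := by
        rw [← Subgroup.mul_normal N G₀]
        rw [sup_comm N G₀]
        exact hyS
      obtain ⟨n, hn, g, hg, hng⟩ := hy
      refine ⟨QuotientGroup.mk ⟨n, hn⟩, ?_⟩
      have : f (QuotientGroup.mk ⟨n, hn⟩) = QuotientGroup.mk (ι ⟨n, hn⟩) := rfl
      rw [this]
      apply Quotient.sound'
      rw [QuotientGroup.leftRel_apply]
      -- need (ι ⟨n, hn⟩)⁻¹ * x ∈ M
      have hgN : (⟨g, hG₀le hg⟩ : Nstar) ∈ M := hG₀subM _ hg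
      have hyeq : y = (ι ⟨n, hn⟩) * ⟨g, hG₀le hg⟩ := by
        apply Subtype.ext
        exact hng.symm
      have hxy : x⁻¹ * y ∈ M := hyU
      rw [hyeq] at hxy
      have : (ι ⟨n, hn⟩)⁻¹ * x = ((x⁻¹ * (ι ⟨n, hn⟩ * ⟨g, hG₀le hg⟩)) * (⟨g, hG₀le hg⟩ : Nstar)⁻¹)⁻¹ := by
        group
      rw [this]
      exact M.inv_mem (M.mul_mem hxy (M.inv_mem hgN))
  have : Finite (Nstar ⧸ M) := Finite.of_surjective f hfsurj
  exact Subgroup.finiteIndex_of_finite_quotient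
end

section
/- Let G be a topological group, N a closed normal subgroup, M an open normal subgroup of N* = closure(G₀N) containing G₀. Then MN/M is discrete in N*/M, and N*/M is isomorphic as a group to N/(M ∩ N). -/
/-- Let `N` be a closed normal subgroup of `G`, `N* = closure(G₀N)`, and `M`
an open normal subgroup of `N*` containing `G₀`. Then the image `MN/M` of `N`
is discrete in `N*/M`, and the canonical map `N → N*/M` induced by the
inclusion `N ↪ N*` is surjective with kernel `M ∩ N`, so that
`N*/M ≅ N/(M ∩ N)` as groups. -/
theorem stmt16 (G : Type*) [Group G] [TopologicalSpace G] [IsTopologicalGroup G]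
    (N : Subgroup G) [N.Normal] (hN : IsClosed (N : Set G))
    (Nstar : Subgroup G)
    (hNstar : Nstar = (Subgroup.connectedComponentOfOne G ⊔ N).topologicalClosure)
    (M : Subgroup Nstar) [M.Normal] (hMopen : IsOpen (M : Set Nstar))
    (hG0 : ∀ x : Nstar, (x : G) ∈ connectedComponent (1 : G) → x ∈ M) :
    DiscreteTopology ((QuotientGroup.mk : Nstar → Nstar ⧸ M) ''
      ((N.subgroupOf Nstar : Subgroup Nstar) : Set Nstar)) ∧
    ∃ f : (N.subgroupOf Nstar) →* (Nstar ⧸ M),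
      (∀ x : (N.subgroupOf Nstar), f x = QuotientGroup.mk (x : Nstar)) ∧
      Function.Surjective f ∧
      f.ker = M.subgroupOf (N.subgroupOf Nstar) := by
  set N' : Subgroup Nstar := N.subgroupOf Nstar with hN'
  -- the quotient is discrete
  have hdisc : DiscreteTopology (Nstar ⧸ M) := QuotientGroup.discreteTopology hMopen
  refine ⟨inferInstance, ?_⟩
  -- key : M ⊔ N' = ⊤
  have hNsub : N ≤ Nstar := by
    rw [hNstar]
    exact le_trans le_sup_right (Subgroup.le_topologicalClosure _)
  have hHopen : IsOpen ((M ⊔ N' : Subgroup Nstar) : Set Nstar) :=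
    Subgroup.isOpen_mono le_sup_left hMopen
  have hHclosed : IsClosed ((M ⊔ N' : Subgroup Nstar) : Set Nstar) :=
    Subgroup.isClosed_of_isOpen _ hHopen
  have hNstarClosed : IsClosed (Nstar : Set G) := by
    rw [hNstar]; exact (Subgroup.connectedComponentOfOne G ⊔ N).isClosed_topologicalClosure
  have hKclosed : IsClosed (((M ⊔ N').map Nstar.subtype : Subgroup G) : Set G) := by
    have : (((M ⊔ N').map Nstar.subtype : Subgroup G) : Set G)
        = Subtype.val '' ((M ⊔ N' : Subgroup Nstar) : Set Nstar) := by
      ext x; simp [Subgroup.mem_map]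
    rw [this]
    exact hNstarClosed.isClosedEmbedding_subtypeVal.isClosedMap _ hHclosed
  have hle : Subgroup.connectedComponentOfOne G ⊔ N ≤ (M ⊔ N').map Nstar.subtype := by
    refine sup_le ?_ ?_
    · intro g hg
      have hgN : g ∈ Nstar := by
        rw [hNstar]
        exact Subgroup.le_topologicalClosure _ (Subgroup.mem_sup_left hg)
      exact ⟨⟨g, hgN⟩, Subgroup.mem_sup_left (hG0 ⟨g, hgN⟩ hg), rfl⟩
    · intro g hg
      exact ⟨⟨g, hNsub hg⟩, Subgroup.mem_sup_right (show (⟨g, hNsub hg⟩ : Nstar) ∈ N' from hg), rfl⟩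
  have htop : (M ⊔ N' : Subgroup Nstar) = ⊤ := by
    rw [eq_top_iff]
    intro x _
    have hx : (x : G) ∈ (M ⊔ N').map Nstar.subtype := by
      have : Nstar ≤ (M ⊔ N').map Nstar.subtype :=
        le_trans (le_of_eq hNstar)
          (Subgroup.topologicalClosure_minimal _ hle hKclosed)
      exact this x.2
    obtain ⟨y, hy, hyx⟩ := hx
    rwa [show y = x from Subtype.ext hyx] at hy
  refine ⟨(QuotientGroup.mk' M).comp N'.subtype, fun x => rfl, ?_, ?_⟩
  · intro q
    obtain ⟨x, rfl⟩ := QuotientGroup.mk'_surjective M q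
    have hx : x ∈ (M ⊔ N' : Subgroup Nstar) := htop ▸ Subgroup.mem_top x
    rw [← SetLike.mem_coe, Subgroup.normal_mul] at hx
    obtain ⟨m, hm, n, hn, rfl⟩ := hx
    refine ⟨⟨n, hn⟩, ?_⟩
    show QuotientGroup.mk (n : Nstar) = QuotientGroup.mk (m * n)
    rw [QuotientGroup.mk_mul, (QuotientGroup.eq_one_iff m).mpr hm, one_mul]
  · ext x
    simp [MonoidHom.mem_ker, QuotientGroup.eq_one_iff, Subgroup.mem_subgroupOf]
end
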